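/- arXiv:2203.12478 — 2 statements merged into one kernel-verified Lean document; each statement's English description precedes it below -/
import Mathlib

section
/- Let X be a monoidal differential storage category. Then the functor F_L : X → LIN[X_!], defined as the identity on objects and sending g : A → B to ε_A ; g, is an isomorphism of categories, with inverse sending a linear coKleisli map ⟦f⟧ : !A → B to η_A ; ⟦f⟧. -/
open CategoryTheory MonoidalCategory Limits

/-- A coalgebra modality on a symmetric monoidal category: a comonad `(!, δ, ε)` together
with natural transformations `Δ_A : !A ⟶ !A ⊗ !A` and `e_A : !A ⟶ k` making each `!A` a
cocommutative comonoid, such that each `δ_A` is a comonoid morphism. -/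
structure CoalgebraModality (C : Type u) [Category.{v} C] [MonoidalCategory C]
    [SymmetricCategory C] where
  /-- The underlying comonad `(!, δ, ε)`. -/
  Q : Comonad C
  /-- The comultiplication `Δ_A : !A ⟶ !A ⊗ !A`. -/
  Δ : ∀ A : C, Q.obj A ⟶ Q.obj A ⊗ Q.obj A
  /-- The counit `e_A : !A ⟶ k`. -/
  e : ∀ A : C, Q.obj A ⟶ 𝟙_ C
  Δ_natural : ∀ {A B : C} (f : A ⟶ B), Q.map f ≫ Δ B = Δ A ≫ (Q.map f ⊗ₘ Q.map f)
  e_natural : ∀ {A B : C} (f : A ⟶ B), Q.map f ≫ e B = e A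
  counit_left : ∀ A : C, Δ A ≫ (e A ▷ Q.obj A) ≫ (λ_ (Q.obj A)).hom = 𝟙 (Q.obj A)
  counit_right : ∀ A : C, Δ A ≫ (Q.obj A ◁ e A) ≫ (ρ_ (Q.obj A)).hom = 𝟙 (Q.obj A)
  coassoc : ∀ A : C,
    Δ A ≫ (Δ A ▷ Q.obj A) ≫ (α_ (Q.obj A) (Q.obj A) (Q.obj A)).hom =
      Δ A ≫ (Q.obj A ◁ Δ A)
  cocomm : ∀ A : C, Δ A ≫ (β_ (Q.obj A) (Q.obj A)).hom = Δ A
  δ_comonoid_Δ : ∀ A : C,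
    Q.δ.app A ≫ Δ (Q.obj A) = Δ A ≫ (Q.δ.app A ⊗ₘ Q.δ.app A)
  δ_comonoid_e : ∀ A : C, Q.δ.app A ≫ e (Q.obj A) = e A

namespace CoalgebraModality

variable {C : Type u} [Category.{v} C] [MonoidalCategory C] [SymmetricCategory C]
  (M : CoalgebraModality C)

/-- The identity map of `A` in the fibre `L_![X₀]`: `e_{X₀} ⊗ 1_A` (up to unitor). -/
def fId (X₀ A : C) : M.Q.obj X₀ ⊗ A ⟶ A := (M.e X₀ ▷ A) ≫ (λ_ A).hom

/-- Composition in the fibre `L_![X₀]`: the composite of `f : !X₀ ⊗ A ⟶ B` and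
`g : !X₀ ⊗ B ⟶ C` is `(Δ_{X₀} ⊗ 1_A);(1 ⊗ f);g`. -/
def fComp {X₀ A B E : C} (f : M.Q.obj X₀ ⊗ A ⟶ B) (g : M.Q.obj X₀ ⊗ B ⟶ E) :
    M.Q.obj X₀ ⊗ A ⟶ E :=
  (M.Δ X₀ ▷ A) ≫ (α_ (M.Q.obj X₀) (M.Q.obj X₀) A).hom ≫ (M.Q.obj X₀ ◁ f) ≫ g

end CoalgebraModality

/-- An additive symmetric monoidal category: hom-sets are commutative monoids such that
composition and the tensor product preserve the additive structure (zero maps are given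
by the `HasZeroMorphisms` structure). -/
class AddHoms (C : Type u) [Category.{v} C] [MonoidalCategory C]
    [Limits.HasZeroMorphisms C] where
  hAdd : ∀ {A B : C}, (A ⟶ B) → (A ⟶ B) → (A ⟶ B)
  hAdd_assoc : ∀ {A B : C} (f g h : A ⟶ B), hAdd (hAdd f g) h = hAdd f (hAdd g h)
  hAdd_comm : ∀ {A B : C} (f g : A ⟶ B), hAdd f g = hAdd g f
  hAdd_zero : ∀ {A B : C} (f : A ⟶ B), hAdd f 0 = f
  comp_hAdd : ∀ {A B E : C} (f : A ⟶ B) (g h : B ⟶ E),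
    f ≫ hAdd g h = hAdd (f ≫ g) (f ≫ h)
  hAdd_comp : ∀ {A B E : C} (f g : A ⟶ B) (h : B ⟶ E),
    hAdd f g ≫ h = hAdd (f ≫ h) (g ≫ h)
  whiskerLeft_hAdd : ∀ {A B : C} (X : C) (f g : A ⟶ B),
    X ◁ hAdd f g = hAdd (X ◁ f) (X ◁ g)
  whiskerRight_hAdd : ∀ {A B : C} (f g : A ⟶ B) (X : C),
    hAdd f g ▷ X = hAdd (f ▷ X) (g ▷ X)
  whiskerLeft_zero : ∀ {A B : C} (X : C), X ◁ (0 : A ⟶ B) = 0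
  whiskerRight_zero : ∀ {A B : C} (X : C), (0 : A ⟶ B) ▷ X = 0

/-- A deriving transformation `d_A : !A ⊗ A ⟶ !A` for a coalgebra modality on an additive
symmetric monoidal category, satisfying the axioms [d.1]–[d.5] of a monoidal differential
category. -/
structure DerivingTransformation {C : Type u} [Category.{v} C] [MonoidalCategory C]
    [SymmetricCategory C] [Limits.HasZeroMorphisms C] [AddHoms C]
    (M : CoalgebraModality C) where
  d : ∀ A : C, M.Q.obj A ⊗ A ⟶ M.Q.obj A
  d_natural : ∀ {A B : C} (f : A ⟶ B), (M.Q.map f ⊗ₘ f) ≫ d B = d A ≫ M.Q.map f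
  /-- [d.1] the constant rule. -/
  d1 : ∀ A : C, d A ≫ M.e A = 0
  /-- [d.2] the Leibniz rule. -/
  d2 : ∀ A : C, d A ≫ M.Δ A =
    (M.Δ A ▷ A) ≫ (α_ (M.Q.obj A) (M.Q.obj A) A).hom ≫
      AddHoms.hAdd (M.Q.obj A ◁ d A)
        ((M.Q.obj A ◁ (β_ (M.Q.obj A) A).hom) ≫
          (α_ (M.Q.obj A) A (M.Q.obj A)).inv ≫ (d A ▷ M.Q.obj A))
  /-- [d.3] the linear rule. -/
  d3 : ∀ A : C, d A ≫ M.Q.ε.app A = (M.e A ▷ A) ≫ (λ_ A).hom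
  /-- [d.4] the chain rule. -/
  d4 : ∀ A : C, d A ≫ M.Q.δ.app A =
    (M.Δ A ▷ A) ≫ (α_ (M.Q.obj A) (M.Q.obj A) A).hom ≫
      (M.Q.δ.app A ⊗ₘ d A) ≫ d (M.Q.obj A)
  /-- [d.5] the interchange rule. -/
  d5 : ∀ A : C,
    (α_ (M.Q.obj A) A A).hom ≫ (M.Q.obj A ◁ (β_ A A).hom) ≫
      (α_ (M.Q.obj A) A A).inv ≫ (d A ▷ A) ≫ d A = (d A ▷ A) ≫ d A

/-- The coderiving transformation `d°_A := Δ_A ; (1_{!A} ⊗ ε_A) : !A ⟶ !A ⊗ A`. -/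
def CoalgebraModality.dco {C : Type u} [Category.{v} C] [MonoidalCategory C]
    [SymmetricCategory C] (M : CoalgebraModality C) (A : C) :
    M.Q.obj A ⟶ M.Q.obj A ⊗ A :=
  M.Δ A ≫ (M.Q.obj A ◁ M.Q.ε.app A)

/-- Linearity of a coKleisli map `⟦f⟧ : !A ⟶ B` in the coKleisli Cartesian differential
category: `⟦f⟧` is linear iff `d°_A ; (!(0) ⊗ 1_A) ; d_A ; ⟦f⟧ = ⟦f⟧`. -/
def IsLinearCoK {C : Type u} [Category.{v} C] [MonoidalCategory C]
    [SymmetricCategory C] [Limits.HasZeroMorphisms C] [AddHoms C]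
    (M : CoalgebraModality C) (Dv : DerivingTransformation M) {A B : C}
    (f : M.Q.obj A ⟶ B) : Prop :=
  M.dco A ≫ (M.Q.map (0 : A ⟶ A) ▷ A) ≫ Dv.d A ≫ f = f

/-- The codereliction `η_A := (u_A ⊗ 1_A);d_A : A ⟶ !A` of a differential storage
category, where `u_A : k ⟶ !A` is `χ_⊤⁻¹ ; !(0 : ⊤ ⟶ A)` built from the inverse of the
Seely unit map. -/
def coder {C : Type u} [Category.{v} C] [MonoidalCategory C]
    [SymmetricCategory C] [Limits.HasZeroMorphisms C] [AddHoms C]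
    (M : CoalgebraModality C) (Dv : DerivingTransformation M) {Z : C}
    (eZinv : 𝟙_ C ⟶ M.Q.obj Z) (A : C) : A ⟶ M.Q.obj A :=
  (λ_ A).inv ≫ ((eZinv ≫ M.Q.map (0 : Z ⟶ A)) ▷ A) ≫ Dv.d A

/-!
The linear rule [d.3], `d ; ε = e ⊗ 1`, kills every `!(f) ⊗ 1` in front of `d ; ε`: this gives
both `η ; ε = 1` and the linearity of every `ε ; g`. Conversely, `!0 : !A ⟶ !A` factors through
the isomorphism `e_Z : !Z ≅ k` as `e_A ; e_Z⁻¹ ; !0`, so the comonoid counit law turns `ε ; η`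
into the operator `d° ; (!0 ⊗ 1) ; d` whose fixed points are exactly the linear maps.
-/

theorem CategoryTheory.Comonad.δ_map_ε_comp_ε_comp {C : Type u} [Category.{v} C]
    (T : Comonad C) {A B E : C} (g : A ⟶ B) (h : B ⟶ E) :
    T.δ.app A ≫ T.map (T.ε.app A ≫ g) ≫ T.ε.app B ≫ h = T.ε.app A ≫ g ≫ h := by
  simp

namespace CoalgebraModality

variable {C : Type u} [Category.{v} C] [MonoidalCategory C] [SymmetricCategory C]
  (M : CoalgebraModality C)

theorem Δ_comp_e_whiskerRight (A : C) :
    M.Δ A ≫ (M.e A ▷ M.Q.obj A) = (λ_ (M.Q.obj A)).inv := by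
  rw [← Iso.comp_hom_eq_id, Category.assoc, M.counit_left]

theorem dco_comp_e_whiskerRight (A : C) :
    M.dco A ≫ (M.e A ▷ A) = M.Q.ε.app A ≫ (λ_ A).inv := by
  rw [dco, Category.assoc, whisker_exchange, reassoc_of% (M.Δ_comp_e_whiskerRight A),
    ← leftUnitor_inv_naturality]

theorem map_zero_eq_e_comp [HasZeroMorphisms C] {Z : C} {eZinv : 𝟙_ C ⟶ M.Q.obj Z}
    (hZ₁ : M.e Z ≫ eZinv = 𝟙 (M.Q.obj Z)) (A B : C) :
    M.Q.map (0 : A ⟶ B) = M.e A ≫ eZinv ≫ M.Q.map (0 : Z ⟶ B) := by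
  rw [← zero_comp (X := A) (Y := Z) (f := (0 : Z ⟶ B)), M.Q.map_comp,
    ← M.e_natural (0 : A ⟶ Z), Category.assoc, reassoc_of% hZ₁]

end CoalgebraModality

section Codereliction

variable {C : Type u} [Category.{v} C] [MonoidalCategory C] [SymmetricCategory C]
  [HasZeroMorphisms C] [AddHoms C] {M : CoalgebraModality C} (Dv : DerivingTransformation M)

theorem DerivingTransformation.map_whiskerRight_d_ε {A' A : C} (f : A' ⟶ A) :
    (M.Q.map f ▷ A) ≫ Dv.d A ≫ M.Q.ε.app A = (M.e A' ▷ A) ≫ (λ_ A).hom := by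
  rw [Dv.d3, ← comp_whiskerRight_assoc, M.e_natural]

theorem isLinearCoK_ε_comp {A B : C} (g : A ⟶ B) : IsLinearCoK M Dv (M.Q.ε.app A ≫ g) := by
  rw [IsLinearCoK, reassoc_of% (Dv.map_whiskerRight_d_ε (0 : A ⟶ A)),
    reassoc_of% (M.dco_comp_e_whiskerRight A), Iso.inv_hom_id_assoc]

variable {Z : C} {eZinv : 𝟙_ C ⟶ M.Q.obj Z}

theorem coder_comp_ε (hZ₂ : eZinv ≫ M.e Z = 𝟙 (𝟙_ C)) (A : C) :
    coder M Dv eZinv A ≫ M.Q.ε.app A = 𝟙 A := by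
  rw [coder, comp_whiskerRight, Category.assoc, Category.assoc, Category.assoc,
    Dv.map_whiskerRight_d_ε, ← comp_whiskerRight_assoc, hZ₂, id_whiskerRight,
    Category.id_comp, Iso.inv_hom_id]

theorem ε_comp_coder (hZ₁ : M.e Z ≫ eZinv = 𝟙 (M.Q.obj Z)) (A : C) :
    M.Q.ε.app A ≫ coder M Dv eZinv A = M.dco A ≫ (M.Q.map (0 : A ⟶ A) ▷ A) ≫ Dv.d A := by
  rw [M.map_zero_eq_e_comp hZ₁, comp_whiskerRight, Category.assoc,
    reassoc_of% (M.dco_comp_e_whiskerRight A), coder]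

end Codereliction

theorem linear_maps_iso_base_general {C : Type u} [Category.{v} C]
    [MonoidalCategory C] [SymmetricCategory C] [Limits.HasZeroMorphisms C]
    [AddHoms C]
    (M : CoalgebraModality C) (Dv : DerivingTransformation M)
    (Z : C) (eZinv : 𝟙_ C ⟶ M.Q.obj Z)
    (hZ₁ : M.e Z ≫ eZinv = 𝟙 (M.Q.obj Z)) (hZ₂ : eZinv ≫ M.e Z = 𝟙 (𝟙_ C)) :
    -- F_L lands in the linear maps
    (∀ {A B : C} (g : A ⟶ B), IsLinearCoK M Dv (M.Q.ε.app A ≫ g)) ∧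
    -- F_L is functorial: it preserves coKleisli identities and composition
    (∀ A : C, M.Q.ε.app A ≫ 𝟙 A = M.Q.ε.app A) ∧
    (∀ {A B E : C} (g : A ⟶ B) (h : B ⟶ E),
      M.Q.δ.app A ≫ M.Q.map (M.Q.ε.app A ≫ g) ≫ (M.Q.ε.app B ≫ h) =
        M.Q.ε.app A ≫ (g ≫ h)) ∧
    -- the inverse F_L⁻¹ : ⟦f⟧ ↦ η;⟦f⟧ satisfies F_L⁻¹ ∘ F_L = 1
    (∀ {A B : C} (g : A ⟶ B), coder M Dv eZinv A ≫ (M.Q.ε.app A ≫ g) = g) ∧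
    -- and F_L ∘ F_L⁻¹ = 1 on linear maps
    (∀ {A B : C} (f : M.Q.obj A ⟶ B), IsLinearCoK M Dv f →
      M.Q.ε.app A ≫ (coder M Dv eZinv A ≫ f) = f) := by
  refine ⟨isLinearCoK_ε_comp Dv, fun A => Category.comp_id _, M.Q.δ_map_ε_comp_ε_comp,
    fun g => ?_, fun f hf => ?_⟩
  · rw [← Category.assoc, coder_comp_ε Dv hZ₂, Category.id_comp]
  · rw [← Category.assoc, ε_comp_coder Dv hZ₁, Category.assoc, Category.assoc]
    exact hf

/-- Let `X` be a monoidal differential storage category. Then the functor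
`F_L : X ⟶ LIN[X_!]`, the identity on objects and sending `g : A ⟶ B` to `ε_A ; g`, is an
isomorphism of categories with inverse sending a linear coKleisli map `⟦f⟧ : !A ⟶ B` to
`η_A ; ⟦f⟧`: `F_L` lands in the linear maps, is functorial, and the two assignments are
mutually inverse. -/
theorem linear_maps_iso_base {C : Type u} [Category.{v} C]
    [MonoidalCategory C] [SymmetricCategory C] [Limits.HasZeroMorphisms C]
    [Limits.HasZeroObject C] [Limits.HasBinaryBiproducts C] [AddHoms C]
    (M : CoalgebraModality C) (Dv : DerivingTransformation M)
    -- the Seely maps are isomorphisms: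
    (χinv : ∀ A B : C, M.Q.obj A ⊗ M.Q.obj B ⟶ M.Q.obj (A ⊞ B))
    (hχ₁ : ∀ A B : C,
      (M.Δ (A ⊞ B) ≫ (M.Q.map biprod.fst ⊗ₘ M.Q.map biprod.snd)) ≫ χinv A B =
        𝟙 (M.Q.obj (A ⊞ B)))
    (hχ₂ : ∀ A B : C,
      χinv A B ≫ (M.Δ (A ⊞ B) ≫ (M.Q.map biprod.fst ⊗ₘ M.Q.map biprod.snd)) =
        𝟙 (M.Q.obj A ⊗ M.Q.obj B))
    (Z : C) (hZ : Limits.IsZero Z) (eZinv : 𝟙_ C ⟶ M.Q.obj Z)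
    (hZ₁ : M.e Z ≫ eZinv = 𝟙 (M.Q.obj Z)) (hZ₂ : eZinv ≫ M.e Z = 𝟙 (𝟙_ C)) :
    -- F_L lands in the linear maps
    (∀ {A B : C} (g : A ⟶ B), IsLinearCoK M Dv (M.Q.ε.app A ≫ g)) ∧
    -- F_L is functorial: it preserves coKleisli identities and composition
    (∀ A : C, M.Q.ε.app A ≫ 𝟙 A = M.Q.ε.app A) ∧
    (∀ {A B E : C} (g : A ⟶ B) (h : B ⟶ E),
      M.Q.δ.app A ≫ M.Q.map (M.Q.ε.app A ≫ g) ≫ (M.Q.ε.app B ≫ h) =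
        M.Q.ε.app A ≫ (g ≫ h)) ∧
    -- the inverse F_L⁻¹ : ⟦f⟧ ↦ η;⟦f⟧ satisfies F_L⁻¹ ∘ F_L = 1
    (∀ {A B : C} (g : A ⟶ B), coder M Dv eZinv A ≫ (M.Q.ε.app A ≫ g) = g) ∧
    -- and F_L ∘ F_L⁻¹ = 1 on linear maps
    (∀ {A B : C} (f : M.Q.obj A ⟶ B), IsLinearCoK M Dv f →
      M.Q.ε.app A ≫ (coder M Dv eZinv A ≫ f) = f) :=
  linear_maps_iso_base_general M Dv Z eZinv hZ₁ hZ₂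
end

section
/- A monoidal reverse differential category is equivalently a monoidal differential category that is self-dual compact closed. Concretely: given a self-dual compact closed additive symmetric monoidal category with coalgebra modality (!, δ, ε, Δ, e) and deriving transformation d_A : !A ⊗ A → !A, the map r_A := (1_{!A} ⊗ ∩_A ⊗ 1_{!A}); (d_A ⊗ σ_{A,!A}); (∪_{!A} ⊗ 1_A) : !A ⊗ !A → A satisfies the reverse linear rule [r.3]: (1_{!A} ⊗ ε*_A); r_A = e_A ⊗ 1_A (composed with the left unitor), where ε*_A is the transpose of ε_A. -/
open CategoryTheory MonoidalCategory

/-- A self-dual compact closed category: a symmetric monoidal category equipped with,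
for every object `A`, a cup `∪_A : A ⊗ A ⟶ k` and a cap `∩_A : k ⟶ A ⊗ A` making every
object a self-dual object (snake equations) satisfying the twist equations. -/
class SDCC (C : Type*) [Category C] [MonoidalCategory C] [SymmetricCategory C] where
  cup : ∀ A : C, A ⊗ A ⟶ 𝟙_ C
  cap : ∀ A : C, 𝟙_ C ⟶ A ⊗ A
  snake₁ : ∀ A : C,
    (ρ_ A).inv ≫ (A ◁ cap A) ≫ (α_ A A A).inv ≫ (cup A ▷ A) ≫ (λ_ A).hom = 𝟙 A
  snake₂ : ∀ A : C,
    (λ_ A).inv ≫ (cap A ▷ A) ≫ (α_ A A A).hom ≫ (A ◁ cup A) ≫ (ρ_ A).hom = 𝟙 A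
  twist_cup : ∀ A : C, (β_ A A).hom ≫ cup A = cup A
  twist_cap : ∀ A : C, cap A ≫ (β_ A A).hom = cap A

/-- The transpose `f* := (∩_A ⊗ 1_B);(1_A ⊗ f ⊗ 1_B);(1_A ⊗ ∪_B) : B ⟶ A`
of a map `f : A ⟶ B` in a self-dual compact closed category. -/
def SDCC.transpose {C : Type*} [Category C] [MonoidalCategory C] [SymmetricCategory C]
    [SDCC C] {A B : C} (f : A ⟶ B) : B ⟶ A :=
  (λ_ B).inv ≫ (SDCC.cap A ▷ B) ≫ (α_ A A B).hom ≫ (A ◁ (f ▷ B)) ≫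
    (A ◁ SDCC.cup B) ≫ (ρ_ A).hom
open CategoryTheory MonoidalCategory Limits

/-- The reverse deriving transformation
`r_A := (1_{!A} ⊗ ∩_A ⊗ 1_{!A}); (d_A ⊗ σ_{A,!A}); (∪_{!A} ⊗ 1_A) : !A ⊗ !A ⟶ A`
constructed from a deriving transformation in a self-dual compact closed category. -/
def revD {C : Type u} [Category.{v} C] [MonoidalCategory C] [SymmetricCategory C]
    [Limits.HasZeroMorphisms C] [AddHoms C] [SDCC C]
    (M : CoalgebraModality C) (Dv : DerivingTransformation M) (A : C) :
    M.Q.obj A ⊗ M.Q.obj A ⟶ A :=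
  (M.Q.obj A ◁ (λ_ (M.Q.obj A)).inv) ≫
    (M.Q.obj A ◁ (SDCC.cap A ▷ M.Q.obj A)) ≫
    (M.Q.obj A ◁ (α_ A A (M.Q.obj A)).hom) ≫
    (α_ (M.Q.obj A) A (A ⊗ M.Q.obj A)).inv ≫
    (Dv.d A ⊗ₘ (β_ A (M.Q.obj A)).hom) ≫
    (α_ (M.Q.obj A) (M.Q.obj A) A).inv ≫
    (SDCC.cup (M.Q.obj A) ▷ A) ≫ (λ_ A).hom

/-! `r_A` is the partial transpose of `d_A` in its last two variables. Partial transposition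
turns precomposition with a transpose `g*` into postcomposition with `g`, so
`(1 ⊗ ε*) ; r_A` is the partial transpose of `d_A ; ε_A`, which is `(e_A ⊗ 1) ; λ` by [d.3].
The partial transpose commutes with `e_A ⊗ 1`, and it fixes the unitor `λ_A` by the snake
equation together with the symmetry of the cap. -/

namespace SDCC

variable {C : Type u} [Category.{v} C] [MonoidalCategory C] [SymmetricCategory C] [SDCC C]

abbrev exactPairing (A : C) : ExactPairing A A where
  coevaluation' := cap A
  evaluation' := cup A
  coevaluation_evaluation' := by
    rw [← cancel_epi (ρ_ A).inv, ← cancel_mono (λ_ A).hom]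
    simpa using snake₁ A
  evaluation_coevaluation' := by
    rw [← cancel_epi (λ_ A).inv, ← cancel_mono (ρ_ A).hom]
    simpa using snake₂ A

lemma whiskerLeft_transpose_cup {A B : C} (f : A ⟶ B) :
    (A ◁ transpose f) ≫ cup A = (f ▷ B) ≫ cup B := by
  let _ := exactPairing A
  let _ := exactPairing B
  let _ : HasLeftDual A := ⟨A⟩
  let _ : HasLeftDual B := ⟨B⟩
  have h : transpose f = (ᘁf) := by
    dsimp [transpose, leftAdjointMate, ExactPairing.coevaluation, ExactPairing.evaluation,
      exactPairing]
    monoidal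
  rw [h]
  exact leftAdjointMate_comp_evaluation f

lemma snake_braiding (A : C) :
    (cap A ▷ A) ≫ (α_ A A A).hom ≫ (A ◁ (β_ A A).hom) ≫ (α_ A A A).inv ≫
      (cup A ▷ A) ≫ (λ_ A).hom = (λ_ A).hom := by
  rw [← twist_cap A, comp_whiskerRight, Category.assoc]
  slice_lhs 2 4 => rw [← BraidedCategory.hexagon_forward]
  simp only [Category.assoc, Iso.hom_inv_id, Category.comp_id]
  slice_lhs 3 4 => rw [← BraidedCategory.braiding_naturality_right]
  slice_lhs 4 5 => rw [braiding_leftUnitor]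
  rw [← cancel_epi (λ_ A).inv]
  simpa using snake₂ A

/-- Bends the input `A` of `h` into an output and its output `B` into an input. -/
def partialTranspose {X A B : C} (h : X ⊗ A ⟶ B) : X ⊗ B ⟶ A :=
  (X ◁ (λ_ B).inv) ≫ (X ◁ (cap A ▷ B)) ≫ (X ◁ (α_ A A B).hom) ≫ (α_ X A (A ⊗ B)).inv ≫
    (h ⊗ₘ (β_ A B).hom) ≫ (α_ B B A).inv ≫ (cup B ▷ A) ≫ (λ_ A).hom

lemma whiskerLeft_transpose_comp_partialTranspose {X A B B' : C} (h : X ⊗ A ⟶ B)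
    (g : B ⟶ B') : (X ◁ transpose g) ≫ partialTranspose h = partialTranspose (h ≫ g) := by
  simp only [partialTranspose, MonoidalCategory.tensorHom_def', ← whiskerLeft_comp_assoc,
    leftUnitor_inv_naturality_assoc, whisker_exchange_assoc, associator_naturality_right]
  simp only [whiskerLeft_comp, Category.assoc, associator_inv_naturality_right_assoc]
  rw [← whiskerLeft_comp_assoc (X ⊗ A), BraidedCategory.braiding_naturality_right,
    whiskerLeft_comp_assoc, whisker_exchange_assoc, associator_inv_naturality_middle_assoc,
    ← comp_whiskerRight_assoc, whiskerLeft_transpose_cup, comp_whiskerRight_assoc,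
    ← associator_inv_naturality_left_assoc, comp_whiskerRight_assoc]

lemma partialTranspose_whiskerRight_comp {X' X A B : C} (φ : X' ⟶ X) (h : X ⊗ A ⟶ B) :
    partialTranspose ((φ ▷ A) ≫ h) = (φ ▷ B) ≫ partialTranspose h := by
  simp only [partialTranspose, MonoidalCategory.tensorHom_def, comp_whiskerRight,
    Category.assoc, ← associator_inv_naturality_left_assoc, whisker_exchange_assoc]

lemma partialTranspose_leftUnitor (A : C) : partialTranspose (λ_ A).hom = (λ_ A).hom := by
  conv_rhs => rw [← snake_braiding A]
  simp only [partialTranspose, MonoidalCategory.tensorHom_def']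
  monoidal

end SDCC

lemma revD_eq_partialTranspose {C : Type u} [Category.{v} C] [MonoidalCategory C]
    [SymmetricCategory C] [HasZeroMorphisms C] [AddHoms C] [SDCC C]
    (M : CoalgebraModality C) (Dv : DerivingTransformation M) (A : C) :
    revD M Dv A = SDCC.partialTranspose (Dv.d A) := rfl

/-- Given a self-dual compact closed additive symmetric monoidal category
with a coalgebra modality `(!, δ, ε, Δ, e)` and a deriving transformation
`d_A : !A ⊗ A ⟶ !A`, the reverse deriving transformation
`r_A := (1 ⊗ ∩_A ⊗ 1); (d_A ⊗ σ_{A,!A}); (∪_{!A} ⊗ 1_A)` satisfies the reverse linear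
rule [r.3]: `(1_{!A} ⊗ ε*_A); r_A = e_A ⊗ 1_A` (composed with the left unitor), where
`ε*_A` is the transpose of `ε_A`. -/
theorem reverse_linear_rule {C : Type u} [Category.{v} C] [MonoidalCategory C]
    [SymmetricCategory C] [Limits.HasZeroMorphisms C] [AddHoms C] [SDCC C]
    (M : CoalgebraModality C) (Dv : DerivingTransformation M) (A : C) :
    (M.Q.obj A ◁ SDCC.transpose (M.Q.ε.app A)) ≫ revD M Dv A =
      (M.e A ▷ A) ≫ (λ_ A).hom := by
  rw [revD_eq_partialTranspose, SDCC.whiskerLeft_transpose_comp_partialTranspose, Dv.d3,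
    SDCC.partialTranspose_whiskerRight_comp, SDCC.partialTranspose_leftUnitor]
  rfl
end
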